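/- arXiv:2010.02918 — 12 statements merged into one kernel-verified Lean document; each statement's English description precedes it below -/
import Mathlib

section
/- Let R be a ring and let A be a submodule of modules B and C, with A pure in both B and C. Then the canonical map π : B ⊕ C → (B ⊕ C)/{(a, -a) : a ∈ A} is a surjective homomorphism whose kernel {(a,-a) : a ∈ A} is a pure submodule of B ⊕ C; i.e., π is a pure epimorphism. -/
/-!
The kernel `{(a, -a) : a ∈ A}` is the image of `A` under `(iB, -iC)`. A system with right-hand
sides `(iB tᵢ, -iC tᵢ)` solvable in `B ⊕ C` is, after projecting to `B`, solvable in `B`, hence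
(by purity of `A` in `B`) in `A`; a solution `p` in `A` then yields the solution `(iB p, -iC p)`
inside the kernel.
-/

universe u v

/-- A submodule `A ≤ M` is pure if every finite system of `R`-linear equations with
parameters in `A` that is solvable in `M` is solvable in `A`. -/
def IsPureSubmodule (R : Type u) [Ring R] {M : Type v} [AddCommGroup M] [Module R M]
    (A : Submodule R M) : Prop :=
  ∀ (k n : ℕ) (c : Fin k → Fin n → R) (a : Fin k → M),
    (∀ i, a i ∈ A) →
    (∃ x : Fin n → M, ∀ i, (∑ j, c i j • x j) = a i) →
    ∃ x : Fin n → M, (∀ j, x j ∈ A) ∧ ∀ i, (∑ j, c i j • x j) = a i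

/-- A linear map is a pure embedding if it is injective and its range is a pure submodule. -/
def IsPureEmbedding (R : Type u) [Ring R] {M N : Type v} [AddCommGroup M] [Module R M]
    [AddCommGroup N] [Module R N] (f : M →ₗ[R] N) : Prop :=
  Function.Injective f ∧ IsPureSubmodule R (LinearMap.range f)

/-- A module is pure-injective if it is a direct summand of every module containing it
as a pure submodule, i.e. every pure embedding out of it admits a retraction. -/
def IsPureInjective (R : Type u) [Ring R] (M : Type v) [AddCommGroup M] [Module R M] : Prop :=
  ∀ (N : Type v) [AddCommGroup N] [Module R N] (f : M →ₗ[R] N),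
    IsPureEmbedding R f → ∃ g : N →ₗ[R] M, g ∘ₗ f = LinearMap.id

/-- A module is absolutely pure if it is pure in every module containing it. -/
def IsAbsolutelyPure (R : Type u) [Ring R] (M : Type v) [AddCommGroup M] [Module R M] : Prop :=
  ∀ (N : Type v) [AddCommGroup N] [Module R N] (f : M →ₗ[R] N),
    Function.Injective f → IsPureSubmodule R (LinearMap.range f)

theorem IsPureSubmodule.exists_solution_of_injective {R : Type*} [Ring R]
    {A B : Type*} [AddCommGroup A] [Module R A] [AddCommGroup B] [Module R B]
    {f : A →ₗ[R] B} (hf : Function.Injective f) (hpure : IsPureSubmodule R (LinearMap.range f))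
    {k n : ℕ} (c : Fin k → Fin n → R) (t : Fin k → A)
    (hsol : ∃ x : Fin n → B, ∀ i, ∑ j, c i j • x j = f (t i)) :
    ∃ p : Fin n → A, ∀ i, ∑ j, c i j • p j = t i := by
  obtain ⟨x, hx_mem, hx⟩ := hpure k n c (fun i => f (t i)) (fun i => ⟨t i, rfl⟩) hsol
  choose p hp using hx_mem
  refine ⟨p, fun i => hf ?_⟩
  simpa only [map_sum, map_smul, hp] using hx i

theorem isPureSubmodule_range_prod {R : Type*} [Ring R]
    {A B C : Type*} [AddCommGroup A] [Module R A] [AddCommGroup B] [Module R B]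
    [AddCommGroup C] [Module R C] {f : A →ₗ[R] B} (g : A →ₗ[R] C)
    (hf : Function.Injective f) (hpure : IsPureSubmodule R (LinearMap.range f)) :
    IsPureSubmodule R (LinearMap.range (f.prod g)) := by
  rintro k n c a ha ⟨x, hx⟩
  choose t ht using ha
  have hsol : ∃ y : Fin n → B, ∀ i, ∑ j, c i j • y j = f (t i) := by
    refine ⟨fun j => (x j).1, fun i => ?_⟩
    simpa only [Prod.fst_sum, Prod.smul_fst, ← ht i, LinearMap.prod_apply,
      Function.prod_apply] using congrArg Prod.fst (hx i)
  obtain ⟨p, hp⟩ := hpure.exists_solution_of_injective hf c t hsol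
  refine ⟨fun j => f.prod g (p j), fun j => ⟨p j, rfl⟩, fun i => ?_⟩
  simp only [← ht i, ← hp i, map_sum, map_smul]

theorem stmt2_general (R : Type u) [Ring R]
    (A B C : Type u) [AddCommGroup A] [Module R A] [AddCommGroup B] [Module R B]
    [AddCommGroup C] [Module R C]
    (iB : A →ₗ[R] B) (iC : A →ₗ[R] C)
    (hB : IsPureEmbedding R iB) :
    Function.Surjective (LinearMap.range (iB.prod (-iC))).mkQ ∧
    LinearMap.ker (LinearMap.range (iB.prod (-iC))).mkQ
      = LinearMap.range (iB.prod (-iC)) ∧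
    IsPureSubmodule R (LinearMap.range (iB.prod (-iC))) :=
  ⟨Submodule.mkQ_surjective _, Submodule.ker_mkQ _, isPureSubmodule_range_prod _ hB.1 hB.2⟩

/-- if A is pure in both B and C, then the canonical map
π : B ⊕ C → (B ⊕ C)/{(a,-a) : a ∈ A} is a pure epimorphism: it is surjective,
its kernel is {(a,-a) : a ∈ A}, and this kernel is pure in B ⊕ C. -/
theorem stmt2 (R : Type u) [Ring R]
    (A B C : Type u) [AddCommGroup A] [Module R A] [AddCommGroup B] [Module R B]
    [AddCommGroup C] [Module R C]
    (iB : A →ₗ[R] B) (iC : A →ₗ[R] C)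
    (hB : IsPureEmbedding R iB) (hC : IsPureEmbedding R iC) :
    Function.Surjective (LinearMap.range (iB.prod (-iC))).mkQ ∧
    LinearMap.ker (LinearMap.range (iB.prod (-iC))).mkQ
      = LinearMap.range (iB.prod (-iC)) ∧
    IsPureSubmodule R (LinearMap.range (iB.prod (-iC))) :=
  stmt2_general R A B C iB iC hB
end

section
/- Let R be a ring and suppose K is a class of R-modules closed under finite direct sums, pure submodules, isomorphisms, and pure epimorphic images. Then K is closed under pushouts of pure embeddings: if M, N₁, N₂ ∈ K and f₁ : M → N₁, f₂ : M → N₂ are pure embeddings, then the pushout P = (N₁ ⊕ N₂)/{(f₁(m), -f₂(m)) : m ∈ M} belongs to K. -/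
universe u v

section PureSubmodule

variable {R : Type u} [Ring R] {M N₁ : Type v} {N₂ : Type*}
  [AddCommGroup M] [Module R M] [AddCommGroup N₁] [Module R N₁] [AddCommGroup N₂] [Module R N₂]

lemma LinearMap.map_sum_smul {P Q : Type*} [AddCommGroup P] [Module R P] [AddCommGroup Q]
    [Module R Q] (φ : P →ₗ[R] Q) {n : ℕ} (c : Fin n → R) (y : Fin n → P) :
    φ (∑ j, c j • y j) = ∑ j, c j • φ (y j) := by
  simp only [map_sum, map_smul]

/-- A system with parameters in the graph of `g` over a pure embedding `f` is solved by
projecting it to `N₁`, solving it in `range f`, and pulling the solution back along `f`. -/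
theorem IsPureEmbedding.isPureSubmodule_range_prod {f : M →ₗ[R] N₁} (hf : IsPureEmbedding R f)
    (g : M →ₗ[R] N₂) : IsPureSubmodule R (LinearMap.range (f.prod g)) := by
  rintro k n c a ha ⟨x, hx⟩
  choose m hm using ha
  have hsol₁ : ∃ x₁ : Fin n → N₁, ∀ i, ∑ j, c i j • x₁ j = f (m i) := by
    refine ⟨fun j ↦ (x j).1, fun i ↦ ?_⟩
    simpa [Prod.fst_sum, ← hm i] using congrArg Prod.fst (hx i)
  obtain ⟨x₁, hx₁_mem, hx₁⟩ := hf.2 k n c (fun i ↦ f (m i)) (fun i ↦ ⟨m i, rfl⟩) hsol₁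
  choose y hy using hx₁_mem
  have hy_sol : ∀ i, ∑ j, c i j • y j = m i := fun i ↦
    hf.1 (by rw [LinearMap.map_sum_smul]; simpa only [hy] using hx₁ i)
  refine ⟨fun j ↦ f.prod g (y j), fun j ↦ ⟨y j, rfl⟩, fun i ↦ ?_⟩
  rw [← LinearMap.map_sum_smul, hy_sol, hm]

end PureSubmodule

theorem stmt3_general (R : Type u) [Ring R]
    (K : (M : Type u) → [AddCommGroup M] → [Module R M] → Prop)
    (hsum : ∀ (M N : Type u) [AddCommGroup M] [Module R M] [AddCommGroup N] [Module R N],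
      K M → K N → K (M × N))
    (hepi : ∀ (M : Type u) [AddCommGroup M] [Module R M] (A : Submodule R M),
      K M → IsPureSubmodule R A → K (M ⧸ A))
    (M N₁ N₂ : Type u) [AddCommGroup M] [Module R M]
    [AddCommGroup N₁] [Module R N₁] [AddCommGroup N₂] [Module R N₂]
    (f₁ : M →ₗ[R] N₁) (f₂ : M →ₗ[R] N₂)
    (hf₁ : IsPureEmbedding R f₁)
    (hN₁ : K N₁) (hN₂ : K N₂) :
    K ((N₁ × N₂) ⧸ LinearMap.range (f₁.prod (-f₂))) :=
  hepi _ _ (hsum _ _ hN₁ hN₂) (hf₁.isPureSubmodule_range_prod (-f₂))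

/-- a class of R-modules closed under finite direct sums, pure submodules,
isomorphisms and pure epimorphic images is closed under pushouts of pure embeddings. -/
theorem stmt3 (R : Type u) [Ring R]
    (K : (M : Type u) → [AddCommGroup M] → [Module R M] → Prop)
    (hsum : ∀ (M N : Type u) [AddCommGroup M] [Module R M] [AddCommGroup N] [Module R N],
      K M → K N → K (M × N))
    (hpure : ∀ (M : Type u) [AddCommGroup M] [Module R M] (A : Submodule R M),
      K M → IsPureSubmodule R A → K A)
    (hiso : ∀ (M N : Type u) [AddCommGroup M] [Module R M] [AddCommGroup N] [Module R N],
      K M → (M ≃ₗ[R] N) → K N)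
    (hepi : ∀ (M : Type u) [AddCommGroup M] [Module R M] (A : Submodule R M),
      K M → IsPureSubmodule R A → K (M ⧸ A))
    (M N₁ N₂ : Type u) [AddCommGroup M] [Module R M]
    [AddCommGroup N₁] [Module R N₁] [AddCommGroup N₂] [Module R N₂]
    (f₁ : M →ₗ[R] N₁) (f₂ : M →ₗ[R] N₂)
    (hf₁ : IsPureEmbedding R f₁) (hf₂ : IsPureEmbedding R f₂)
    (hM : K M) (hN₁ : K N₁) (hN₂ : K N₂) :
    K ((N₁ × N₂) ⧸ LinearMap.range (f₁.prod (-f₂))) :=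
  stmt3_general R K hsum hepi M N₁ N₂ f₁ f₂ hf₁ hN₁ hN₂
end

section
/- Let R be a ring and suppose K is a class of R-modules closed under finite direct sums, pure submodules, and isomorphisms. If K is closed under pushouts of pure embeddings, then K is closed under pure epimorphic images: whenever 0 → A → B → C → 0 is a pure-exact sequence with B ∈ K, then C ∈ K. -/
/-!
For a pure submodule `A ≤ B` with `B ∈ K`, the pushout `P` of `A ↪ B` along itself lies in `K`.
The map `B ⧸ A → P`, `m + A ↦ [(m, -m)]`, has the retraction `[(m₁, m₂)] ↦ m₁ + A`, so `B ⧸ A`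
is isomorphic to a direct summand, hence a pure submodule, of `P`, and therefore lies in `K`.
-/

universe u v

section Purity

variable {R : Type u} [Ring R] {M N : Type v} [AddCommGroup M] [Module R M]
  [AddCommGroup N] [Module R N]

theorem isPureSubmodule_range_of_leftInverse {g : M →ₗ[R] N} {ρ : N →ₗ[R] M}
    (h : Function.LeftInverse ρ g) : IsPureSubmodule R (LinearMap.range g) := by
  rintro k n c a ha ⟨x, hx⟩
  refine ⟨fun j => g (ρ (x j)), fun j => LinearMap.mem_range_self g _, fun l => ?_⟩
  obtain ⟨y, hy⟩ := ha l
  calc ∑ j, c l j • g (ρ (x j)) = g (ρ (∑ j, c l j • x j)) := by simp only [map_sum, map_smul]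
    _ = a l := by rw [hx l, ← hy, h y]

theorem IsPureSubmodule.isPureEmbedding_subtype {A : Submodule R M} (hA : IsPureSubmodule R A) :
    IsPureEmbedding R A.subtype :=
  ⟨A.injective_subtype, by rwa [A.range_subtype]⟩

end Purity

namespace Submodule

variable {R : Type u} [Ring R] {M : Type v} [AddCommGroup M] [Module R M] (A : Submodule R M)

/-- The relations defining the pushout of `A ↪ M` along itself. -/
abbrev selfPushoutRel : Submodule R (M × M) :=
  LinearMap.range (A.subtype.prod (-A.subtype))

def quotientToSelfPushout : (M ⧸ A) →ₗ[R] (M × M) ⧸ A.selfPushoutRel :=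
  A.liftQ (A.selfPushoutRel.mkQ ∘ₗ LinearMap.id.prod (-LinearMap.id)) fun a ha =>
    (Quotient.mk_eq_zero _).2 ⟨⟨a, ha⟩, rfl⟩

def selfPushoutToQuotient : (M × M) ⧸ A.selfPushoutRel →ₗ[R] M ⧸ A :=
  A.selfPushoutRel.liftQ (A.mkQ ∘ₗ LinearMap.fst R M M) <| by
    rintro _ ⟨a, rfl⟩
    simp

theorem leftInverse_selfPushoutToQuotient :
    Function.LeftInverse A.selfPushoutToQuotient A.quotientToSelfPushout := by
  rintro ⟨m⟩
  rfl

end Submodule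

theorem stmt4_general (R : Type u) [Ring R]
    (K : (M : Type u) → [AddCommGroup M] → [Module R M] → Prop)
    (hpure : ∀ (M : Type u) [AddCommGroup M] [Module R M] (A : Submodule R M),
      K M → IsPureSubmodule R A → K A)
    (hiso : ∀ (M N : Type u) [AddCommGroup M] [Module R M] [AddCommGroup N] [Module R N],
      K M → (M ≃ₗ[R] N) → K N)
    (hpush : ∀ (M N₁ N₂ : Type u) [AddCommGroup M] [Module R M]
      [AddCommGroup N₁] [Module R N₁] [AddCommGroup N₂] [Module R N₂]
      (f₁ : M →ₗ[R] N₁) (f₂ : M →ₗ[R] N₂),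
      IsPureEmbedding R f₁ → IsPureEmbedding R f₂ → K M → K N₁ → K N₂ →
      K ((N₁ × N₂) ⧸ LinearMap.range (f₁.prod (-f₂))))
    (A B C : Type u) [AddCommGroup A] [Module R A] [AddCommGroup B] [Module R B]
    [AddCommGroup C] [Module R C]
    (i : A →ₗ[R] B) (p : B →ₗ[R] C)
    (hp : Function.Surjective p)
    (hexact : LinearMap.range i = LinearMap.ker p)
    (hpureseq : IsPureSubmodule R (LinearMap.range i))
    (hB : K B) :
    K C := by
  set S := LinearMap.range i
  have hpushout : K ((B × B) ⧸ S.selfPushoutRel) :=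
    hpush S B B S.subtype S.subtype hpureseq.isPureEmbedding_subtype
      hpureseq.isPureEmbedding_subtype (hpure B S hB hpureseq) hB hB
  have hsplit := S.leftInverse_selfPushoutToQuotient
  have hquot : K (B ⧸ S) :=
    hiso _ _ (hpure _ _ hpushout (isPureSubmodule_range_of_leftInverse hsplit))
      (LinearEquiv.ofLeftInverse hsplit).symm
  exact hiso _ _ hquot (S.quotEquivOfEq _ hexact ≪≫ₗ p.quotKerEquivOfSurjective hp)

/-- a class of R-modules closed under finite direct sums, pure submodules,
isomorphisms and pushouts of pure embeddings is closed under pure epimorphic images. -/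
theorem stmt4 (R : Type u) [Ring R]
    (K : (M : Type u) → [AddCommGroup M] → [Module R M] → Prop)
    (hsum : ∀ (M N : Type u) [AddCommGroup M] [Module R M] [AddCommGroup N] [Module R N],
      K M → K N → K (M × N))
    (hpure : ∀ (M : Type u) [AddCommGroup M] [Module R M] (A : Submodule R M),
      K M → IsPureSubmodule R A → K A)
    (hiso : ∀ (M N : Type u) [AddCommGroup M] [Module R M] [AddCommGroup N] [Module R N],
      K M → (M ≃ₗ[R] N) → K N)
    (hpush : ∀ (M N₁ N₂ : Type u) [AddCommGroup M] [Module R M]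
      [AddCommGroup N₁] [Module R N₁] [AddCommGroup N₂] [Module R N₂]
      (f₁ : M →ₗ[R] N₁) (f₂ : M →ₗ[R] N₂),
      IsPureEmbedding R f₁ → IsPureEmbedding R f₂ → K M → K N₁ → K N₂ →
      K ((N₁ × N₂) ⧸ LinearMap.range (f₁.prod (-f₂))))
    (A B C : Type u) [AddCommGroup A] [Module R A] [AddCommGroup B] [Module R B]
    [AddCommGroup C] [Module R C]
    (i : A →ₗ[R] B) (p : B →ₗ[R] C)
    (hi : Function.Injective i) (hp : Function.Surjective p)
    (hexact : LinearMap.range i = LinearMap.ker p)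
    (hpureseq : IsPureSubmodule R (LinearMap.range i))
    (hB : K B) :
    K C :=
  stmt4_general R K hpure hiso hpush A B C i p hp hexact hpureseq hB
end

section
/- Let R be a ring and let f₁ : M → N₁, f₂ : M → N₂ be pure embeddings of R-modules. Then in the pushout P = (N₁ ⊕ N₂)/{(f₁(m), -f₂(m)) : m ∈ M}, the canonical maps g₁ : N₁ → P, n₁ ↦ [(n₁, 0)] and g₂ : N₂ → P, n₂ ↦ [(0, n₂)] are pure embeddings. -/
universe u v

/-!
A linear map `f : M → N` is a pure embedding iff it reflects solvability: a finite system
`c z = b` with `b` in `M` that becomes solvable after applying `f` is already solvable in `M`.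
In the pushout `P = (N₁ × N₂) / {(f₁ m, f₂ m)}` along a pure embedding `f₂`, a solution of
`c x = [(b, 0)]` lifts to some `(u, v)` with `c (u, v) - (b, 0) = (f₁ m, f₂ m)`. Then `c v = f₂ m`,
so purity of `f₂` yields `w` with `c w = m`, and `z = u - f₁ w` solves `c z = b` in `N₁`.
The sign in the pushout is absorbed since `-f₂` is again a pure embedding, and the second
canonical map is the first one after swapping the factors.
-/

open LinearMap

section Solvability

variable {R : Type u} [Ring R] {M N : Type v} [AddCommGroup M] [Module R M]
  [AddCommGroup N] [Module R N]

/-- Injectivity is the case of the system `0 = b` in no unknowns. -/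
theorem isPureEmbedding_iff_reflects_solvable (f : M →ₗ[R] N) :
    IsPureEmbedding R f ↔ ∀ (k n : ℕ) (c : Fin k → Fin n → R) (b : Fin k → M),
      (∃ x : Fin n → N, ∀ i, ∑ j, c i j • x j = f (b i)) →
      ∃ z : Fin n → M, ∀ i, ∑ j, c i j • z j = b i := by
  constructor
  · rintro ⟨hinj, hpure⟩ k n c b hsol
    obtain ⟨y, hy_mem, hy⟩ :=
      hpure k n c (fun i => f (b i)) (fun i => mem_range_self f (b i)) hsol
    choose z hz using fun j => mem_range.mp (hy_mem j)
    refine ⟨z, fun i => hinj ?_⟩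
    simpa only [map_sum, map_smul, hz] using hy i
  · intro h
    refine ⟨(injective_iff_map_eq_zero f).mpr fun b hb => ?_, ?_⟩
    · obtain ⟨z, hz⟩ := h 1 0 0 (fun _ => b) ⟨0, fun _ => by simp [hb]⟩
      simpa using (hz 0).symm
    · intro k n c a ha hsol
      choose b hb using ha
      obtain ⟨z, hz⟩ := h k n c b (by simpa only [hb] using hsol)
      refine ⟨fun j => f (z j), fun j => mem_range_self f (z j), fun i => ?_⟩
      rw [← hb i, ← hz i, map_sum]
      simp only [map_smul]

theorem IsPureEmbedding.linearEquiv_comp {N' : Type v} [AddCommGroup N'] [Module R N']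
    {f : M →ₗ[R] N} (hf : IsPureEmbedding R f) (e : N ≃ₗ[R] N') :
    IsPureEmbedding R (e.toLinearMap ∘ₗ f) := by
  rw [isPureEmbedding_iff_reflects_solvable] at hf ⊢
  rintro k n c b ⟨x, hx⟩
  refine hf k n c b ⟨fun j => e.symm (x j), fun i => e.injective ?_⟩
  simpa only [map_sum, map_smul, LinearEquiv.apply_symm_apply, comp_apply,
    LinearEquiv.coe_coe] using hx i

theorem IsPureEmbedding.neg {f : M →ₗ[R] N} (hf : IsPureEmbedding R f) :
    IsPureEmbedding R (-f) :=
  hf.linearEquiv_comp (LinearEquiv.neg R)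

end Solvability

section Pushout

variable {R : Type u} [Ring R] {M N₁ N₂ : Type v} [AddCommGroup M] [Module R M]
  [AddCommGroup N₁] [Module R N₁] [AddCommGroup N₂] [Module R N₂]

theorem IsPureEmbedding.pushout_inl (f₁ : M →ₗ[R] N₁) {f₂ : M →ₗ[R] N₂}
    (hf₂ : IsPureEmbedding R f₂) :
    IsPureEmbedding R ((range (f₁.prod f₂)).mkQ ∘ₗ inl R N₁ N₂) := by
  rw [isPureEmbedding_iff_reflects_solvable] at hf₂ ⊢
  rintro k n c b ⟨x, hx⟩
  choose p hp using fun j => (range (f₁.prod f₂)).mkQ_surjective (x j)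
  have hdiff : ∀ i, ∑ j, c i j • p j - (b i, 0) ∈ range (f₁.prod f₂) := fun i =>
    (Submodule.Quotient.eq _).mp <| by
      rw [← Submodule.mkQ_apply, ← Submodule.mkQ_apply, map_sum]
      simpa only [map_smul, hp, comp_apply, inl_apply] using hx i
  choose m hm using fun i => mem_range.mp (hdiff i)
  have hm₁ : ∀ i, f₁ (m i) = ∑ j, c i j • (p j).1 - b i := fun i => by
    simpa [Prod.fst_sum] using congrArg Prod.fst (hm i)
  have hm₂ : ∀ i, ∑ j, c i j • (p j).2 = f₂ (m i) := fun i => by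
    simpa [Prod.snd_sum] using (congrArg Prod.snd (hm i)).symm
  obtain ⟨w, hw⟩ := hf₂ k n c m ⟨fun j => (p j).2, hm₂⟩
  refine ⟨fun j => (p j).1 - f₁ (w j), fun i => ?_⟩
  have hfw : ∑ j, c i j • f₁ (w j) = f₁ (m i) := by
    rw [← hw i, map_sum]
    simp only [map_smul]
  simp only [smul_sub, Finset.sum_sub_distrib, hfw, hm₁, sub_sub_cancel]

theorem map_prodComm_range_prod (f₁ : M →ₗ[R] N₁) (f₂ : M →ₗ[R] N₂) :
    (range (f₁.prod f₂)).map (LinearEquiv.prodComm R N₁ N₂).toLinearMap =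
      range (f₂.prod f₁) := by
  rw [← range_comp]
  rfl

theorem IsPureEmbedding.pushout_inr {f₁ : M →ₗ[R] N₁} (hf₁ : IsPureEmbedding R f₁)
    (f₂ : M →ₗ[R] N₂) :
    IsPureEmbedding R ((range (f₁.prod f₂)).mkQ ∘ₗ inr R N₁ N₂) := by
  let e := Submodule.Quotient.equiv _ _ _ (map_prodComm_range_prod f₁ f₂)
  have he : (range (f₁.prod f₂)).mkQ ∘ₗ inr R N₁ N₂ =
      e.symm.toLinearMap ∘ₗ (range (f₂.prod f₁)).mkQ ∘ₗ inl R N₂ N₁ := by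
    ext n
    simp [e]
  rw [he]
  exact (hf₁.pushout_inl f₂).linearEquiv_comp e.symm

end Pushout

/-- the canonical maps into the pushout of a span of pure embeddings
are pure embeddings. -/
theorem stmt5 (R : Type u) [Ring R]
    (M N₁ N₂ : Type u) [AddCommGroup M] [Module R M]
    [AddCommGroup N₁] [Module R N₁] [AddCommGroup N₂] [Module R N₂]
    (f₁ : M →ₗ[R] N₁) (f₂ : M →ₗ[R] N₂)
    (hf₁ : IsPureEmbedding R f₁) (hf₂ : IsPureEmbedding R f₂) :
    IsPureEmbedding R
      ((LinearMap.range (f₁.prod (-f₂))).mkQ ∘ₗ LinearMap.inl R N₁ N₂) ∧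
    IsPureEmbedding R
      ((LinearMap.range (f₁.prod (-f₂))).mkQ ∘ₗ LinearMap.inr R N₁ N₂) :=
  ⟨hf₂.neg.pushout_inl f₁, hf₁.pushout_inr (-f₂)⟩
end

section
/- Let R be a left noetherian ring. Then every direct sum of a family of injective left R-modules is injective. -/
universe u v

/-!
By Baer's criterion it suffices to extend a map `g : I → ⨁ i, M i` from a left ideal `I` to `R`.
Since `I` is finitely generated, `g` lands in the finite subsum `⨁ i ∈ S, M i`, where `S` is the
union of the supports of the images of the generators; each of the finitely many components of `g` extends
to `R` because `M i` is injective, and the sum of these extensions extends `g`.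
-/

namespace DirectSum

variable {R : Type*} [Semiring R] {ι : Type*} [DecidableEq ι] {M : ι → Type*}
  [∀ i, AddCommMonoid (M i)] [∀ i, Module R (M i)]

theorem sum_lof_component_of_support_subset [∀ i (x : M i), Decidable (x ≠ 0)]
    {x : ⨁ i, M i} {S : Finset ι} (hS : x.support ⊆ S) :
    ∑ i ∈ S, lof R ι M i (component R ι M i x) = x := by
  rw [← Finset.sum_subset hS fun i _ hi => by
    rw [← apply_eq_component, DFinsupp.notMem_support_iff.mp hi, map_zero]]
  exact sum_support_of x

theorem exists_finset_sum_lof_component_comp_eq {N : Type*} [AddCommMonoid N] [Module R N]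
    [Module.Finite R N] (g : N →ₗ[R] ⨁ i, M i) :
    ∃ S : Finset ι, (∑ i ∈ S, lof R ι M i ∘ₗ component R ι M i) ∘ₗ g = g := by
  classical
  obtain ⟨s, hs⟩ := Module.Finite.fg_top (R := R) (M := N)
  refine ⟨s.biUnion fun t => (g t).support, LinearMap.ext_on hs fun t ht => ?_⟩
  simpa using sum_lof_component_of_support_subset
    (Finset.subset_biUnion_of_mem (fun t => (g t).support) ht)

end DirectSum

/-- over a left noetherian ring, every direct sum of injective modules
is injective. -/
theorem stmt8 (R : Type u) [Ring R] [IsNoetherianRing R]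
    (ι : Type u) (M : ι → Type u) [∀ i, AddCommGroup (M i)] [∀ i, Module R (M i)]
    (h : ∀ i, Module.Injective R (M i)) :
    Module.Injective R (DirectSum ι M) := by
  classical
  refine Module.Baer.injective fun I g => ?_
  obtain ⟨S, hS⟩ := DirectSum.exists_finset_sum_lof_component_comp_eq g
  choose G hG using fun i =>
    Module.Baer.of_injective (h i) I (DirectSum.component R ι M i ∘ₗ g)
  refine ⟨∑ i ∈ S, DirectSum.lof R ι M i ∘ₗ G i, fun x hx => ?_⟩
  conv_rhs => rw [← hS]
  simp [hG _ x hx]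
end

section
/- Let R be a ring such that every direct sum of injective left R-modules is injective. Then R is left noetherian. -/
universe u v

/-!
Let `I₀ ≤ I₁ ≤ ⋯` be a chain of left ideals with union `I`, and embed each `R ⧸ Iₙ` into an
injective module `Eₙ`. Every `x ∈ I` lies in almost all `Iₙ`, so `x ↦ (x mod Iₙ)ₙ` is a linear
map `I → ⨁ₙ Eₙ`. Since `⨁ₙ Eₙ` is injective it extends to `R`, and the image `d` of `1` has finite
support; then `x mod Iₙ = x • dₙ = 0` for every `x ∈ I` and every large `n`, i.e. the chain
stabilises.
-/

open CategoryTheory DirectSum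

theorem Module.exists_injective_ker_eq (R : Type u) [Ring R] {M : Type v} [AddCommGroup M]
    [Module R M] [Small.{v} R] (p : Submodule R M) :
    ∃ (E : ModuleCat.{v} R) (φ : M →ₗ[R] E), Module.Injective R E ∧ LinearMap.ker φ = p := by
  let ι := Injective.ι (ModuleCat.of R (M ⧸ p))
  have hι : Function.Injective ι := (ModuleCat.mono_iff_injective ι).mp inferInstance
  refine ⟨_, ι.hom ∘ₗ p.mkQ,
    Module.injective_module_of_injective_object R _ (inj := Injective.injective_under _), ?_⟩
  rw [LinearMap.ker_comp_of_ker_eq_bot _ (LinearMap.ker_eq_bot.mpr hι), Submodule.ker_mkQ]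

theorem DFinsupp.exists_linearMap_of_finite_support {R M ι : Type*} [Semiring R] [AddCommMonoid M]
    [Module R M] {E : ι → Type*} [∀ i, AddCommMonoid (E i)] [∀ i, Module R (E i)]
    (g : M →ₗ[R] ∀ i, E i) (hg : ∀ x, {i | g x i ≠ 0}.Finite) :
    ∃ g' : M →ₗ[R] Π₀ i, E i, ∀ x i, g' x i = g x i := by
  classical
  have hrange : ∀ x, g x ∈ LinearMap.range (coeFnLinearMap R (β := E)) := fun x =>
    ⟨DFinsupp.mk (hg x).toFinset fun i => g x i, funext fun i => by
      by_cases hi : g x i = 0 <;> simp [DFinsupp.mk_apply, hi]⟩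
  let e := LinearEquiv.ofInjective (coeFnLinearMap R (β := E)) DFunLike.coe_injective
  refine ⟨e.symm ∘ₗ g.codRestrict _ hrange, fun x i => ?_⟩
  exact congr_fun (congr_arg Subtype.val (e.apply_symm_apply ⟨g x, hrange x⟩)) i

theorem DFinsupp.exists_forall_ge_eq_zero {E : ℕ → Type*} [∀ n, Zero (E n)] (d : Π₀ n, E n) :
    ∃ N, ∀ n, N ≤ n → d n = 0 := by
  classical
  obtain ⟨N, hN⟩ := d.support.exists_nat_subset_range
  exact ⟨N, fun n hn => DFinsupp.notMem_support_iff.mp fun h =>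
    (Finset.mem_range.mp (hN h)).not_ge hn⟩

theorem Ideal.exists_iSup_le_ker_of_baer_directSum {R : Type*} [Ring R] {E : ℕ → Type*}
    [∀ n, AddCommGroup (E n)] [∀ n, Module R (E n)] (hE : Module.Baer R (⨁ n, E n))
    (f : ℕ →o Ideal R) (φ : ∀ n, R →ₗ[R] E n) (hφ : ∀ n, f n ≤ LinearMap.ker (φ n)) :
    ∃ N, ∀ n, N ≤ n → ⨆ k, f k ≤ LinearMap.ker (φ n) := by
  set I := ⨆ k, f k
  have eventually_zero : ∀ x ∈ I, ∃ N, ∀ n, N ≤ n → φ n x = 0 := fun x hx => by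
    obtain ⟨N, hN⟩ := (Submodule.mem_iSup_of_directed _ f.monotone.directed_le).mp hx
    exact ⟨N, fun n hn => hφ n (f.monotone hn hN)⟩
  obtain ⟨g, hg⟩ := DFinsupp.exists_linearMap_of_finite_support
    (LinearMap.pi φ ∘ₗ I.subtype) fun x => by
      obtain ⟨N, hN⟩ := eventually_zero x x.2
      exact (Set.finite_lt_nat N).subset fun n hn => lt_of_not_ge fun h => hn (hN n h)
  obtain ⟨h, hh⟩ := hE I g
  obtain ⟨N, hN⟩ := DFinsupp.exists_forall_ge_eq_zero (h 1)
  refine ⟨N, fun n hn x hx => ?_⟩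
  calc φ n x = h x n := by simp [hh x hx, hg]
    _ = (x • h 1) n := by rw [← map_smul, smul_eq_mul, mul_one]
    _ = x • h 1 n := DFinsupp.smul_apply _ _ _
    _ = 0 := by rw [hN n hn, smul_zero]

/-- if every direct sum of injective left R-modules is injective,
then R is left noetherian. -/
theorem stmt9 (R : Type u) [Ring R]
    (H : ∀ (ι : Type u) (M : ι → Type u) [∀ i, AddCommGroup (M i)] [∀ i, Module R (M i)],
      (∀ i, Module.Injective R (M i)) → Module.Injective R (DirectSum ι M)) :
    IsNoetherianRing R := by
  rw [isNoetherianRing_iff, ← monotone_stabilizes_iff_noetherian]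
  intro f
  choose E φ hE hker using fun n => Module.exists_injective_ker_eq R (f n)
  -- `H` only covers index types in `Type u`, so we sum over `ULift ℕ` and transport along
  -- `ULift ℕ ≃ ℕ` in the form of Baer's criterion.
  have hbaer : Module.Baer R (⨁ n, E n) :=
    .of_equiv (lequivCongrLeft R Equiv.ulift)
      (.of_injective (H (ULift ℕ) (fun i => E i.down) fun i => hE i.down))
  obtain ⟨N, hN⟩ := Ideal.exists_iSup_le_ker_of_baer_directSum hbaer f φ fun n => (hker n).ge
  refine ⟨N, fun n hn => le_antisymm (f.monotone hn) ?_⟩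
  calc f n ≤ ⨆ k, f k := le_iSup f n
    _ ≤ f N := hker N ▸ hN N le_rfl
end

section
/- Let R be a left noetherian ring. Then every absolutely pure left R-module is injective. -/
universe u v

/-!
By Baer's criterion it suffices to extend a map `f : I → M` from an ideal to `R`. Embed `M` into
an injective module `E`; then `ι ∘ f` extends to `g : R → E`. Since `I` is finitely generated,
say by `s₁, …, sₙ`, the system `sᵢ • x = f sᵢ` is finite and solved in `E` by `g 1`, so purity of
`M` in `E` gives a solution `m ∈ M`, and `r ↦ r • m` extends `f`.
-/

theorem Module.exists_injective_embedding (R : Type u) [Ring R] [Small.{v} R]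
    (M : Type v) [AddCommGroup M] [Module R M] :
    ∃ (E : Type v) (_ : AddCommGroup E) (_ : Module R E),
      Module.Injective R E ∧ ∃ ι : M →ₗ[R] E, Function.Injective ι := by
  let E := CategoryTheory.Injective.under (ModuleCat.of R M)
  let ι := CategoryTheory.Injective.ι (ModuleCat.of R M)
  have : CategoryTheory.Injective (ModuleCat.of R E) :=
    inferInstanceAs (CategoryTheory.Injective E)
  exact ⟨E, _, _, Module.injective_module_of_injective_object R E, ι.hom,
    (ModuleCat.mono_iff_injective ι).mp inferInstance⟩

theorem IsPureSubmodule.exists_mem_smul_eq {R : Type u} [Ring R] {M : Type v} [AddCommGroup M]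
    [Module R M] {A : Submodule R M} (hA : IsPureSubmodule R A) {k : ℕ} (c : Fin k → R)
    {a : Fin k → M} (ha : ∀ i, a i ∈ A) {y : M} (hy : ∀ i, c i • y = a i) :
    ∃ x ∈ A, ∀ i, c i • x = a i := by
  obtain ⟨x, hxA, hx⟩ := hA k 1 (fun i _ ↦ c i) a ha ⟨fun _ ↦ y, by simpa using hy⟩
  exact ⟨x 0, hxA 0, by simpa using hx⟩

theorem Ideal.exists_extension_of_isPureSubmodule_range {R : Type u} [Ring R] {M : Type v}
    {N : Type*} [AddCommGroup M] [Module R M] [AddCommGroup N] [Module R N]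
    {ι : M →ₗ[R] N} (hι : Function.Injective ι) (hpure : IsPureSubmodule R (LinearMap.range ι))
    {I : Ideal R} [Module.Finite R I] (f : I →ₗ[R] M) (g : R →ₗ[R] N)
    (hg : ∀ x : I, g x = ι (f x)) :
    ∃ g' : R →ₗ[R] M, ∀ (x : R) (mem : x ∈ I), g' x = f ⟨x, mem⟩ := by
  obtain ⟨n, s, hs⟩ := Module.Finite.exists_fin (R := R) (M := I)
  obtain ⟨_, ⟨m, rfl⟩, hm⟩ := hpure.exists_mem_smul_eq (fun i ↦ (s i : R))
    (a := fun i ↦ ι (f (s i))) (fun _ ↦ LinearMap.mem_range_self _ _) (y := g 1)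
    fun i ↦ by rw [← hg, ← map_smul, smul_eq_mul, mul_one]
  have hsm : ∀ i, (s i : R) • m = f (s i) := fun i ↦ hι (by rw [map_smul, hm])
  exact ⟨LinearMap.toSpanSingleton R M m, fun x mem ↦
    LinearMap.congr_fun (LinearMap.ext_on_range hs hsm
      (f := LinearMap.toSpanSingleton R M m ∘ₗ I.subtype)) ⟨x, mem⟩⟩

/-- over a left noetherian ring, every absolutely pure module is injective. -/
theorem stmt11 (R : Type u) [Ring R] [IsNoetherianRing R]
    (M : Type u) [AddCommGroup M] [Module R M]
    (h : IsAbsolutelyPure R M) :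
    Module.Injective R M := by
  obtain ⟨E, _, _, hE, ι, hι⟩ := Module.exists_injective_embedding R M
  refine Module.Baer.injective fun I f ↦ ?_
  obtain ⟨g, hg⟩ := hE.out I.subtype Subtype.coe_injective (ι ∘ₗ f)
  exact Ideal.exists_extension_of_isPureSubmodule_range hι (h E ι hι) f g hg
end

section
/- Let R be a ring, M, N₁, N₂ left R-modules with M a pure submodule of both N₁ and N₂, and suppose the pure-injective hulls satisfy PE(N₁) = PE(M) ⊕ N₁′ and PE(N₂) = PE(M) ⊕ N₂′. Define L = PE(N₁) ⊕ PE(N₂) and maps f : N₁ → L by f(m + n₁) = (m, n₁, m, 0) and g : N₂ → L by g(m + n₂) = (m, 0, m, n₂) (for m ∈ PE(M), nᵢ ∈ Nᵢ′). Then f and g are pure embeddings that agree on M; in particular the class of modules closed under direct sums and pure-injective envelopes has the amalgamation property with respect to pure embeddings. -/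
universe u v

section

variable {R : Type u} [Ring R] {A B : Type v} [AddCommGroup A] [Module R A]
  [AddCommGroup B] [Module R B]

/- `π` turns a system over the range of `φ` into one over `S`; purity of `S` solves it in `S`,
and `φ` carries the solution back. -/
theorem IsPureSubmodule.isPureEmbedding_of_comp_eq_subtype {S : Submodule R A}
    (hS : IsPureSubmodule R S) (φ : S →ₗ[R] B) (π : B →ₗ[R] A) (hπ : π ∘ₗ φ = S.subtype) :
    IsPureEmbedding R φ := by
  have hπφ : ∀ x, π (φ x) = x := fun x => LinearMap.congr_fun hπ x
  refine ⟨fun x y hxy => Subtype.ext ?_, fun k n c a ha ⟨x, hx⟩ => ?_⟩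
  · rw [← hπφ x, ← hπφ y, hxy]
  choose s hs using ha
  have hsolA : ∃ y : Fin n → A, ∀ i, ∑ j, c i j • y j = (s i : A) :=
    ⟨fun j => π (x j), fun i => by
      simpa only [map_sum, map_smul, ← hs i, hπφ] using congrArg π (hx i)⟩
  obtain ⟨y, hyS, hy⟩ := hS k n c (fun i => s i) (fun i => (s i).2) hsolA
  refine ⟨fun j => φ ⟨y j, hyS j⟩, fun j => ⟨_, rfl⟩, fun i => ?_⟩
  have hyS_sum : ∑ j, c i j • (⟨y j, hyS j⟩ : S) = s i :=
    Subtype.ext (by simpa only [Submodule.coe_sum, Submodule.coe_smul] using hy i)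
  rw [← hs i, ← hyS_sum, map_sum]
  simp only [map_smul]

end

/- `PM` plays the role of PE(M), with PE(Nᵢ) = PM × Nᵢ' and Nᵢ realized as the pure
submodule `Sᵢ ≤ PM × Nᵢ'` containing `M`. -/
/-- the amalgamation construction via pure-injective envelopes.
Here PM plays the role of PE(M), with PE(N₁) = PM ⊕ N₁' and PE(N₂) = PM ⊕ N₂',
N₁ and N₂ realized as pure submodules S₁ ≤ PM × N₁', S₂ ≤ PM × N₂' containing M.
The maps f(m + n₁) = (m, n₁, m, 0) and g(m + n₂) = (m, 0, m, n₂) into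
L = PE(N₁) ⊕ PE(N₂) are pure embeddings agreeing on M. -/
theorem stmt12 (R : Type u) [Ring R]
    (PM N₁' N₂' : Type u) [AddCommGroup PM] [Module R PM]
    [AddCommGroup N₁'] [Module R N₁'] [AddCommGroup N₂'] [Module R N₂']
    (M : Submodule R PM)
    (S₁ : Submodule R (PM × N₁')) (S₂ : Submodule R (PM × N₂'))
    (hS₁ : IsPureSubmodule R S₁) (hS₂ : IsPureSubmodule R S₂)
    (hM₁ : ∀ m : M, ((m : PM), (0 : N₁')) ∈ S₁)
    (hM₂ : ∀ m : M, ((m : PM), (0 : N₂')) ∈ S₂) :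
    ∃ (f : S₁ →ₗ[R] (PM × N₁') × (PM × N₂')) (g : S₂ →ₗ[R] (PM × N₁') × (PM × N₂')),
      (∀ x : S₁, f x = ((x : PM × N₁'), ((x : PM × N₁').1, (0 : N₂')))) ∧
      (∀ y : S₂, g y = ((((y : PM × N₂').1, (0 : N₁')) : PM × N₁'), (y : PM × N₂'))) ∧
      IsPureEmbedding R f ∧ IsPureEmbedding R g ∧
      ∀ m : M, f ⟨((m : PM), 0), hM₁ m⟩ = g ⟨((m : PM), 0), hM₂ m⟩ := by
  refine ⟨S₁.subtype.prod (.inl R PM N₂' ∘ₗ .fst R PM N₁' ∘ₗ S₁.subtype),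
    (.inl R PM N₁' ∘ₗ .fst R PM N₂' ∘ₗ S₂.subtype).prod S₂.subtype,
    fun _ => rfl, fun _ => rfl, ?_, ?_, fun _ => rfl⟩
  · exact hS₁.isPureEmbedding_of_comp_eq_subtype _ (.fst R _ _) rfl
  · exact hS₂.isPureEmbedding_of_comp_eq_subtype _ (.snd R _ _) rfl
end

section
/- Let R be a ring, N a left R-module, and M₁, M₂ pure submodules of N. Then there exist submodules M₀ ≤ M₁′ of N with M₁ ≤ M₁′, M₀ ≤ M₂, both M₀ and M₁′ pure in N, |M₀| ≤ |M₁| + |R| + ℵ₀, and such that the canonical map t : (M₁′ ⊕ M₂)/{(m, −m) : m ∈ M₀} → N, t([(a, b)]) = a + b, is a pure embedding. -/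
universe u v

/-!
Close `M₁` in `ω` steps under witnesses for three kinds of finite linear systems with
parameters in the closure: those solvable in `N`, those solvable in `M₂`, and those solvable
modulo `M₂`; each step adds at most `|M₁| + |R| + ℵ₀` elements. The closure `M₁'` is then pure,
`M₀ := M₁' ⊓ M₂` is pure since `M₂` is, and `M₁' ⊔ M₂` is pure: a system over `M₁' ⊔ M₂` is first
solved modulo `M₂` inside `M₁'`, and what remains is a system over `M₂`, solved inside `M₂`. The
pushout map has kernel `{(m, -m) : m ∈ M₁' ⊓ M₂}` and image `M₁' ⊔ M₂`.
-/

namespace Cardinal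

theorem mk_fin_arrow_le {X : Type u} {κ : Cardinal.{u}} (hκ : ℵ₀ ≤ κ) (hX : #X ≤ κ) (k : ℕ) :
    #(Fin k → X) ≤ κ := by
  rw [mk_arrow, lift_uzero, mk_fin, lift_natCast]
  exact (power_le_power_right hX).trans (power_nat_le hκ)

theorem mk_sigma_le_of_countable {ι : Type} [Countable ι] {β : ι → Type u} {κ : Cardinal.{u}}
    (hκ : ℵ₀ ≤ κ) (hβ : ∀ i, #(β i) ≤ κ) : #(Σ i, β i) ≤ κ := by
  rw [mk_sigma]
  refine (sum_le_lift_mk_mul_iSup _).trans (mul_le_of_le hκ ?_ (ciSup_le' hβ))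
  exact (lift_le_aleph0.2 mk_le_aleph0).trans hκ

theorem mk_span_le {R : Type u} {N : Type u} [Semiring R] [AddCommMonoid N] [Module R N]
    {s : Set N} {κ : Cardinal.{u}} (hκ : ℵ₀ ≤ κ) (hR : #R ≤ κ) (hs : #s ≤ κ) :
    #(Submodule.span R s) ≤ κ := by
  let f : (Σ n : ℕ, (Fin n → R) × (Fin n → s)) → Submodule.span R s := fun p =>
    ⟨∑ i, p.2.1 i • (p.2.2 i : N), Submodule.mem_span_set'.2 ⟨_, _, _, rfl⟩⟩
  have hf : Function.Surjective f := by
    rintro ⟨m, hm⟩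
    obtain ⟨n, a, g, rfl⟩ := Submodule.mem_span_set'.1 hm
    exact ⟨⟨n, a, g⟩, rfl⟩
  refine (mk_le_of_surjective hf).trans (mk_sigma_le_of_countable hκ fun n => ?_)
  rw [mk_prod, lift_id, lift_id]
  exact mul_le_of_le hκ (mk_fin_arrow_le hκ hR n) (mk_fin_arrow_le hκ hs n)

end Cardinal

open Cardinal

section Solvable

variable {R : Type*} [Ring R] {N : Type*} [AddCommGroup N] [Module R N]

def SolvableIn (K L : Submodule R N) {k n : ℕ} (c : Fin k → Fin n → R) (a : Fin k → N) : Prop :=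
  ∃ x : Fin n → N, (∀ j, x j ∈ K) ∧ ∀ i, ∑ j, c i j • x j - a i ∈ L

variable {K K' L L' : Submodule R N} {k n : ℕ} {c : Fin k → Fin n → R} {a b : Fin k → N}

theorem solvableIn_bot_iff :
    SolvableIn K ⊥ c a ↔ ∃ x : Fin n → N, (∀ j, x j ∈ K) ∧ ∀ i, ∑ j, c i j • x j = a i := by
  simp only [SolvableIn, Submodule.mem_bot, sub_eq_zero]

theorem SolvableIn.mono (h : SolvableIn K L c a) (hK : K ≤ K') (hL : L ≤ L') :
    SolvableIn K' L' c a :=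
  let ⟨x, hxK, hxL⟩ := h
  ⟨x, fun j => hK (hxK j), fun i => hL (hxL i)⟩

theorem SolvableIn.of_sub_mem (h : SolvableIn K L c a) (hab : ∀ i, a i - b i ∈ L) :
    SolvableIn K L c b := by
  obtain ⟨x, hxK, hxL⟩ := h
  refine ⟨x, hxK, fun i => ?_⟩
  simpa using L.add_mem (hxL i) (hab i)

theorem solvableIn_sum {x : Fin n → N} (hx : ∀ j, x j ∈ K) :
    SolvableIn K L c fun i => ∑ j, c i j • x j :=
  ⟨x, hx, fun i => by simp⟩

theorem SolvableIn.sub (h : SolvableIn K L c a) (h' : SolvableIn K L c b) :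
    SolvableIn K L c (a - b) := by
  obtain ⟨x, hxK, hxL⟩ := h
  obtain ⟨y, hyK, hyL⟩ := h'
  refine ⟨x - y, fun j => K.sub_mem (hxK j) (hyK j), fun i => ?_⟩
  convert L.sub_mem (hxL i) (hyL i) using 1
  simp only [Pi.sub_apply, smul_sub, Finset.sum_sub_distrib]
  abel

theorem SolvableIn.add (h : SolvableIn K L c a) (h' : SolvableIn K L c b) :
    SolvableIn K L c (a + b) := by
  obtain ⟨x, hxK, hxL⟩ := h
  obtain ⟨y, hyK, hyL⟩ := h'
  refine ⟨x + y, fun j => K.add_mem (hxK j) (hyK j), fun i => ?_⟩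
  convert L.add_mem (hxL i) (hyL i) using 1
  simp only [Pi.add_apply, smul_add, Finset.sum_add_distrib]
  abel

def ReflectsSolvableIn (M K L : Submodule R N) : Prop :=
  ∀ {k n : ℕ} (c : Fin k → Fin n → R) (a : Fin k → N),
    (∀ i, a i ∈ M) → SolvableIn K L c a → SolvableIn (M ⊓ K) L c a

theorem isPureSubmodule_iff_reflectsSolvableIn {M : Submodule R N} :
    IsPureSubmodule R M ↔ ReflectsSolvableIn M ⊤ ⊥ := by
  simp only [IsPureSubmodule, ReflectsSolvableIn, solvableIn_bot_iff, inf_top_eq,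
    Submodule.mem_top, implies_true, true_and]

variable {M M₂ : Submodule R N}

theorem ReflectsSolvableIn.isPureSubmodule_inf (hM : ReflectsSolvableIn M M₂ ⊥)
    (h₂ : IsPureSubmodule R M₂) : IsPureSubmodule R (M ⊓ M₂) := by
  rw [isPureSubmodule_iff_reflectsSolvableIn] at h₂ ⊢
  intro k n c a ha hsol
  have hsol₂ : SolvableIn M₂ ⊥ c a := by
    simpa using h₂ c a (fun i => (ha i).2) hsol
  exact (hM c a (fun i => (ha i).1) hsol₂).mono (le_inf le_rfl le_top) le_rfl

theorem ReflectsSolvableIn.isPureSubmodule_sup (hM : ReflectsSolvableIn M ⊤ M₂)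
    (h₂ : IsPureSubmodule R M₂) : IsPureSubmodule R (M ⊔ M₂) := by
  rw [isPureSubmodule_iff_reflectsSolvableIn] at h₂ ⊢
  intro k n c a ha hsol
  choose b hb d hd hbd using fun i => Submodule.mem_sup.1 (ha i)
  have hsol_b : SolvableIn ⊤ M₂ c b :=
    (hsol.mono le_rfl bot_le).of_sub_mem fun i => by simpa [← hbd i] using hd i
  obtain ⟨u, hu, huM₂⟩ := hM c b hb hsol_b
  set a' : Fin k → N := a - fun i => ∑ j, c i j • u j
  have ha' : ∀ i, a' i ∈ M₂ := fun i => by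
    convert M₂.sub_mem (hd i) (huM₂ i) using 1
    simp only [a', Pi.sub_apply, ← hbd i]
    abel
  have hv : SolvableIn (M₂ ⊓ ⊤) ⊥ c a' := h₂ c a' ha' (hsol.sub (solvableIn_sum fun _ => trivial))
  have hu' : SolvableIn (M ⊓ ⊤) ⊥ c fun i => ∑ j, c i j • u j := solvableIn_sum hu
  rw [← sub_add_cancel a fun i => ∑ j, c i j • u j]
  exact (hv.mono (by simp) le_rfl).add (hu'.mono (by simp) le_rfl)

end Solvable

section Closure

variable {R N : Type u} [Ring R] [AddCommGroup N] [Module R N]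

theorem exists_step_reflectsSolvableIn (S : Set (Submodule R N × Submodule R N)) (hS : S.Countable)
    (A : Submodule R N) :
    ∃ B : Submodule R N, A ≤ B ∧ #B ≤ #A + #R + ℵ₀ ∧
      ∀ p ∈ S, ∀ {k n : ℕ} (c : Fin k → Fin n → R) (a : Fin k → N),
        (∀ i, a i ∈ A) → SolvableIn p.1 p.2 c a → SolvableIn (B ⊓ p.1) p.2 c a := by
  let T := {t : S × Σ kn : ℕ × ℕ, (Fin kn.1 → Fin kn.2 → R) × (Fin kn.1 → A) //
    SolvableIn t.1.1.1 t.1.1.2 t.2.2.1 fun i => (t.2.2.2 i : N)}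
  choose x hxK hxL using fun t : T => t.2
  set κ := #A + #R + ℵ₀
  have hκ : ℵ₀ ≤ κ := le_add_self
  have hR : #R ≤ κ := le_add_self.trans le_self_add
  have hA : #A ≤ κ := le_self_add.trans le_self_add
  have hT : #T ≤ κ := by
    refine (mk_subtype_le _).trans ?_
    rw [mk_prod, lift_id, lift_id]
    refine mul_le_of_le hκ ((le_aleph0_iff_set_countable.2 hS).trans hκ)
      (mk_sigma_le_of_countable hκ fun kn => ?_)
    rw [mk_prod, lift_id, lift_id]
    exact mul_le_of_le hκ (mk_fin_arrow_le hκ (mk_fin_arrow_le hκ hR _) _) (mk_fin_arrow_le hκ hA _)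
  refine ⟨Submodule.span R (A ∪ ⋃ t, Set.range (x t)),
    fun y hy => Submodule.subset_span (Or.inl hy), ?_, ?_⟩
  · refine mk_span_le hκ hR ((mk_union_le _ _).trans (add_le_of_le hκ hA ?_))
    refine (mk_iUnion_le _).trans (mul_le_of_le hκ hT (ciSup_le' fun t => ?_))
    exact (le_aleph0_iff_set_countable.2 (Set.finite_range _).countable).trans hκ
  · intro p hp k n c a ha hsol
    let t : T := ⟨(⟨p, hp⟩, ⟨(k, n), c, fun i => ⟨a i, ha i⟩⟩), hsol⟩
    exact ⟨x t, fun j => ⟨Submodule.subset_span (Or.inr (Set.mem_iUnion.2 ⟨t, j, rfl⟩)),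
      hxK t j⟩, hxL t⟩

theorem exists_le_reflectsSolvableIn (S : Set (Submodule R N × Submodule R N)) (hS : S.Countable)
    (M₁ : Submodule R N) :
    ∃ M : Submodule R N, M₁ ≤ M ∧ #M ≤ #M₁ + #R + ℵ₀ ∧
      ∀ p ∈ S, ReflectsSolvableIn M p.1 p.2 := by
  choose step le_step mk_step solvable_step using exists_step_reflectsSolvableIn S hS
  let chain : ℕ →o Submodule R N := ⟨fun m => step^[m] M₁, monotone_nat_of_le_succ fun m => by
    simpa only [Function.iterate_succ_apply'] using le_step _⟩
  set κ := #M₁ + #R + ℵ₀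
  have hκ : ℵ₀ ≤ κ := le_add_self
  have hR : #R ≤ κ := le_add_self.trans le_self_add
  have mk_chain (m : ℕ) : #(chain m) ≤ κ := by
    induction m with
    | zero => exact le_self_add.trans le_self_add
    | succ m ih =>
      simp only [chain, OrderHom.coe_mk, Function.iterate_succ_apply']
      exact (mk_step _).trans (add_le_of_le hκ (add_le_of_le hκ ih hR) hκ)
  refine ⟨⨆ m, chain m, le_iSup chain 0, ?_, fun p hp k n c a ha hsol => ?_⟩
  · have hsurj : Function.Surjective fun y : Σ m, chain m =>
        Submodule.inclusion (le_iSup chain y.1) y.2 := by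
      rintro ⟨y, hy⟩
      obtain ⟨m, hm⟩ := (Submodule.mem_iSup_of_chain chain y).1 hy
      exact ⟨⟨m, y, hm⟩, rfl⟩
    exact (mk_le_of_surjective hsurj).trans (mk_sigma_le_of_countable hκ mk_chain)
  · choose m hm using fun i => (Submodule.mem_iSup_of_chain chain (a i)).1 (ha i)
    have ha' : ∀ i, a i ∈ chain (Finset.univ.sup m) := fun i =>
      chain.monotone (Finset.le_sup (Finset.mem_univ i)) (hm i)
    refine (solvable_step _ p hp c a ha' hsol).mono (inf_le_inf_right _ ?_) le_rfl
    simpa only [chain, OrderHom.coe_mk, ← Function.iterate_succ_apply'] using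
      le_iSup chain (Finset.univ.sup m + 1)

end Closure

namespace Submodule

variable {R N : Type*} [Ring R] [AddCommGroup N] [Module R N] {A B C : Submodule R N}

def pushoutAdd (hA : C ≤ A) (hB : C ≤ B) :
    ((A × B) ⧸ LinearMap.range ((inclusion hA).prod (-(inclusion hB)))) →ₗ[R] N :=
  liftQ _ (A.subtype.coprod B.subtype) <| by
    rintro _ ⟨m, rfl⟩
    simp

variable (hA : C ≤ A) (hB : C ≤ B)

@[simp]
theorem pushoutAdd_mk (x : A) (y : B) : pushoutAdd hA hB (Quotient.mk (x, y)) = x + y :=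
  rfl

theorem range_pushoutAdd : LinearMap.range (pushoutAdd hA hB) = A ⊔ B := by
  rw [pushoutAdd, range_liftQ, LinearMap.range_coprod, range_subtype, range_subtype]

theorem injective_pushoutAdd (hC : A ⊓ B ≤ C) : Function.Injective (pushoutAdd hA hB) := by
  rw [← LinearMap.ker_eq_bot, pushoutAdd]
  refine ker_liftQ_eq_bot _ _ _ ?_
  rintro ⟨x, y⟩ hxy
  have hxy : (x : N) + y = 0 := hxy
  have hy : (y : N) = -x := eq_neg_of_add_eq_zero_right hxy
  have hx : (x : N) ∈ B := by
    rw [eq_neg_of_add_eq_zero_left hxy]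
    exact B.neg_mem y.2
  exact ⟨⟨x, hC ⟨x.2, hx⟩⟩, by ext <;> simp [hy]⟩

end Submodule

theorem stmt14_general (R : Type u) [Ring R] (N : Type u) [AddCommGroup N] [Module R N]
    (M₁ M₂ : Submodule R N) (h₂ : IsPureSubmodule R M₂) :
    ∃ (M₀ M₁' : Submodule R N) (h01 : M₀ ≤ M₁') (h02 : M₀ ≤ M₂),
      M₁ ≤ M₁' ∧ IsPureSubmodule R M₀ ∧ IsPureSubmodule R M₁' ∧
      Cardinal.mk M₀ ≤ Cardinal.mk M₁ + Cardinal.mk R + Cardinal.aleph0 ∧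
      ∃ t : ((↥M₁' × ↥M₂) ⧸
          LinearMap.range
            ((Submodule.inclusion h01).prod (-(Submodule.inclusion h02)))) →ₗ[R] N,
        (∀ (x : M₁') (y : M₂),
          t (Submodule.Quotient.mk (x, y)) = (x : N) + (y : N)) ∧
        IsPureEmbedding R t := by
  obtain ⟨M, hM₁, hcard, hM⟩ :=
    exists_le_reflectsSolvableIn {(⊤, ⊥), (M₂, ⊥), (⊤, M₂)} (Set.toFinite _).countable M₁
  have h01 : M ⊓ M₂ ≤ M := inf_le_left
  have h02 : M ⊓ M₂ ≤ M₂ := inf_le_right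
  refine ⟨M ⊓ M₂, M, h01, h02, hM₁,
    ReflectsSolvableIn.isPureSubmodule_inf (hM (M₂, ⊥) (by simp)) h₂,
    isPureSubmodule_iff_reflectsSolvableIn.2 (hM (⊤, ⊥) (by simp)),
    (mk_le_mk_of_subset h01).trans hcard, Submodule.pushoutAdd h01 h02,
    Submodule.pushoutAdd_mk h01 h02, Submodule.injective_pushoutAdd h01 h02 le_rfl, ?_⟩
  rw [Submodule.range_pushoutAdd]
  exact ReflectsSolvableIn.isPureSubmodule_sup (hM (⊤, M₂) (by simp)) h₂

/-- local character of the pushout independence relation: given pure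
submodules M₁, M₂ of N there are pure submodules M₀ ≤ M₁' with M₁ ≤ M₁', M₀ ≤ M₂,
|M₀| ≤ |M₁| + |R| + ℵ₀, such that the canonical map from the pushout
(M₁' ⊕ M₂)/{(m,−m) : m ∈ M₀} to N, [(a,b)] ↦ a + b, is a pure embedding. -/
theorem stmt14 (R : Type u) [Ring R] (N : Type u) [AddCommGroup N] [Module R N]
    (M₁ M₂ : Submodule R N) (h₁ : IsPureSubmodule R M₁) (h₂ : IsPureSubmodule R M₂) :
    ∃ (M₀ M₁' : Submodule R N) (h01 : M₀ ≤ M₁') (h02 : M₀ ≤ M₂),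
      M₁ ≤ M₁' ∧ IsPureSubmodule R M₀ ∧ IsPureSubmodule R M₁' ∧
      Cardinal.mk M₀ ≤ Cardinal.mk M₁ + Cardinal.mk R + Cardinal.aleph0 ∧
      ∃ t : ((↥M₁' × ↥M₂) ⧸
          LinearMap.range
            ((Submodule.inclusion h01).prod (-(Submodule.inclusion h02)))) →ₗ[R] N,
        (∀ (x : M₁') (y : M₂),
          t (Submodule.Quotient.mk (x, y)) = (x : N) + (y : N)) ∧
        IsPureEmbedding R t :=
  stmt14_general R N M₁ M₂ h₂
end

section
/- Let R be a ring, N an R-module, and M₀ ≤ M₁, M₂ ≤ N submodules with M₀ = M₁ ∩ M₂ in the following strong sense: for every pp-formula φ(x̄, ȳ), tuple ā from M₁ and tuple m̄ from M₂ with N ⊨ φ(ā, m̄), there is a tuple l̄ in M₀ with N ⊨ φ(ā, l̄). Then the map t : (M₁ ⊕ M₂)/{(m, −m) : m ∈ M₀} → N given by t([(a, b)]) = a + b is injective. -/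
/-! The intersection `M₁ ⊓ M₂` is already forced into `M₀` by the single pp-formula
`x - y = 0`: an element `n` of `M₁ ⊓ M₂` satisfies it with `x = y = n`, and the hypothesis
moves the witness `y` into `M₀`, so `n ∈ M₀`. Since `(x, y) ↦ x + y` vanishes only on pairs
`(n, -n)` with `n ∈ M₁ ⊓ M₂`, its kernel is then exactly the antidiagonal of `M₀`. -/

universe u v

/-- The pp-formula `∃ z, ⋀ᵢ aᵢ • x + bᵢ • m + cᵢ • z = 0` is encoded by its coefficient
matrices `a`, `b`, `c`. -/
def IsPPIntersection {R : Type u} [Ring R] {N : Type v} [AddCommGroup N] [Module R N]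
    (M₀ M₁ M₂ : Submodule R N) : Prop :=
  ∀ (p q r s : ℕ) (a : Fin p → Fin q → R) (b : Fin p → Fin r → R)
    (c : Fin p → Fin s → R) (x : Fin q → N) (m : Fin r → N),
    (∀ j, x j ∈ M₁) → (∀ k, m k ∈ M₂) →
    (∃ z : Fin s → N, ∀ i,
      (∑ j, a i j • x j) + (∑ kk, b i kk • m kk) + (∑ l, c i l • z l) = 0) →
    ∃ l : Fin r → N, (∀ kk, l kk ∈ M₀) ∧ ∃ z : Fin s → N, ∀ i,
      (∑ j, a i j • x j) + (∑ kk, b i kk • l kk) + (∑ l', c i l' • z l') = 0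

section

variable {R : Type u} [Ring R] {N : Type v} [AddCommGroup N] [Module R N]
  {M₀ M₁ M₂ : Submodule R N}

theorem IsPPIntersection.inf_le (H : IsPPIntersection M₀ M₁ M₂) : M₁ ⊓ M₂ ≤ M₀ := by
  intro n ⟨hn₁, hn₂⟩
  obtain ⟨l, hl, _, hsolves⟩ := H 1 1 1 0 (fun _ _ => 1) (fun _ _ => -1) (fun _ => Fin.elim0)
    (fun _ => n) (fun _ => n) (fun _ => hn₁) (fun _ => hn₂) ⟨Fin.elim0, fun _ => by simp⟩
  have hnl : n - l 0 = 0 := by simpa [sub_eq_add_neg] using hsolves 0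
  exact sub_eq_zero.mp hnl ▸ hl 0

theorem injective_of_inf_le_of_apply_mk (h01 : M₀ ≤ M₁) (h02 : M₀ ≤ M₂) (hinf : M₁ ⊓ M₂ ≤ M₀)
    (t : ((↥M₁ × ↥M₂) ⧸
      LinearMap.range ((Submodule.inclusion h01).prod (-(Submodule.inclusion h02)))) →ₗ[R] N)
    (ht : ∀ (x : M₁) (y : M₂), t (Submodule.Quotient.mk (x, y)) = (x : N) + (y : N)) :
    Function.Injective t := by
  rw [← LinearMap.ker_eq_bot, LinearMap.ker_eq_bot']
  rintro q hq
  induction q using Submodule.Quotient.induction_on with | _ p => ?_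
  obtain ⟨x, y⟩ := p
  have hxy : (y : N) = -x := eq_neg_of_add_eq_zero_right (ht x y ▸ hq)
  have hx₀ : (x : N) ∈ M₀ := hinf ⟨x.2, neg_neg (x : N) ▸ hxy ▸ M₂.neg_mem y.2⟩
  refine (Submodule.Quotient.mk_eq_zero _).mpr ⟨⟨x, hx₀⟩, ?_⟩
  ext
  · rfl
  · simp [hxy]

end

/-- injectivity of the canonical map out of the pushout, under the
strong intersection hypothesis expressed via pp-formulas. -/
theorem stmt15 (R : Type u) [Ring R] (N : Type u) [AddCommGroup N] [Module R N]
    (M₀ M₁ M₂ : Submodule R N) (h01 : M₀ ≤ M₁) (h02 : M₀ ≤ M₂)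
    (H : ∀ (p q r s : ℕ) (a : Fin p → Fin q → R) (b : Fin p → Fin r → R)
        (c : Fin p → Fin s → R) (x : Fin q → N) (m : Fin r → N),
        (∀ j, x j ∈ M₁) → (∀ k, m k ∈ M₂) →
        (∃ z : Fin s → N, ∀ i,
          (∑ j, a i j • x j) + (∑ kk, b i kk • m kk) + (∑ l, c i l • z l) = 0) →
        ∃ l : Fin r → N, (∀ kk, l kk ∈ M₀) ∧ ∃ z : Fin s → N, ∀ i,
          (∑ j, a i j • x j) + (∑ kk, b i kk • l kk) + (∑ l', c i l' • z l') = 0) :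
    ∀ t : ((↥M₁ × ↥M₂) ⧸
        LinearMap.range
          ((Submodule.inclusion h01).prod (-(Submodule.inclusion h02)))) →ₗ[R] N,
      (∀ (x : M₁) (y : M₂),
        t (Submodule.Quotient.mk (x, y)) = (x : N) + (y : N)) →
      Function.Injective t :=
  fun t ht => injective_of_inf_le_of_apply_mk h01 h02 (IsPPIntersection.inf_le H) t ht
end

section
/- Let R be a Prüfer domain. Then an R-module is flat if and only if it is torsion-free. -/
universe u v

/-!
Flat modules over a domain are torsion-free. Conversely, flatness of a torsion-free `M` means
that `μ : I ⊗ M → M` is injective for every finitely generated ideal `I ≠ 0`. Such an `I` is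
invertible, hence projective, hence flat, so a nonzero `a ∈ I` still acts injectively on
`I ⊗ M`. But `a • z = a ⊗ μ z` in `I ⊗ M`, so `μ z = 0` forces `z = 0`.
-/

open TensorProduct

namespace Ideal

variable {R M : Type*} [CommRing R] [AddCommGroup M] [Module R M]

theorem smul_eq_tmul_lift_lsmul_comp_subtype (I : Ideal R) {a : R} (ha : a ∈ I)
    (z : I ⊗[R] M) :
    a • z = (⟨a, ha⟩ : I) ⊗ₜ lift ((LinearMap.lsmul R M).comp I.subtype) z := by
  induction z using TensorProduct.induction_on with
  | zero => simp
  | tmul x m =>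
    simp only [lift.tmul, LinearMap.coe_comp, Function.comp_apply, Submodule.coe_subtype,
      LinearMap.lsmul_apply, tmul_smul, smul_tmul']
    congr 1
    ext
    simp [mul_comm]
  | add z w hz hw => simp [smul_add, hz, hw, tmul_add]

theorem lift_lsmul_comp_subtype_injective_of_flat (I : Ideal R) [Module.Flat R I] {a : R}
    (ha : a ∈ I) (hreg : IsSMulRegular M a) :
    Function.Injective (lift ((LinearMap.lsmul R M).comp I.subtype)) := by
  rw [injective_iff_map_eq_zero]
  intro z hz
  refine hreg.lTensor I (show a • z = a • 0 from ?_)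
  rw [I.smul_eq_tmul_lift_lsmul_comp_subtype ha, hz, tmul_zero, smul_zero]

theorem flat_of_isUnit_coeIdeal {K : Type*} [CommRing K] [Algebra R K] [IsFractionRing R K]
    (I : Ideal R) (hI : IsUnit (I : FractionalIdeal (nonZeroDivisors R) K)) :
    Module.Flat R I := by
  have : Module.Projective R (Submodule.map (Algebra.linearMap R K) I) :=
    Submodule.projective_of_isUnit (hI.map (FractionalIdeal.coeSubmoduleHom _ K))
  exact Module.Flat.of_linearEquiv
    (Submodule.equivMapOfInjective (Algebra.linearMap R K) (IsFractionRing.injective R K) I)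

end Ideal

/-- over a Prüfer domain (every finitely generated nonzero ideal is
invertible as a fractional ideal), a module is flat iff it is torsion-free. -/
theorem stmt17 (R : Type u) [CommRing R] [IsDomain R]
    (hpruf : ∀ I : Ideal R, I.FG → I ≠ ⊥ →
      IsUnit (I : FractionalIdeal (nonZeroDivisors R) (FractionRing R)))
    (M : Type u) [AddCommGroup M] [Module R M] :
    Module.Flat R M ↔ ∀ (r : R) (m : M), r • m = 0 → r = 0 ∨ m = 0 := by
  refine ⟨fun _ r m h => or_iff_not_imp_left.2 fun hr => ?_, fun htf => ?_⟩
  · exact isSMulRegular_iff_right_eq_zero_of_smul.1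
      (Module.Flat.isSMulRegular_of_nonZeroDivisors (mem_nonZeroDivisors_of_ne_zero hr)) m h
  rw [Module.Flat.iff_lift_lsmul_comp_subtype_injective]
  intro I hfg
  rcases eq_or_ne I ⊥ with rfl | hI
  · exact fun x y _ => Subsingleton.elim x y
  obtain ⟨a, ha, ha0⟩ := Submodule.exists_mem_ne_zero_of_ne_bot hI
  have := I.flat_of_isUnit_coeIdeal (hpruf I hfg hI)
  exact I.lift_lsmul_comp_subtype_injective_of_flat ha
    (isSMulRegular_iff_right_eq_zero_of_smul.2 fun m hm => (htf a m hm).resolve_left ha0)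
end

section
/- Let R be a ring and let {Mᵢ : i ∈ I} be a family of locally injective left R-modules. Then the direct sum ⊕_{i∈I} Mᵢ is locally injective. Moreover, if the direct sum is additionally pure-injective and absolutely pure, then it is injective. -/
universe u v

/-- A module is locally injective if every finite tuple is contained in an injective
submodule. -/
def IsLocallyInjectiveModule (R : Type u) [Ring R] (M : Type v) [AddCommGroup M]
    [Module R M] : Prop :=
  ∀ (n : ℕ) (a : Fin n → M), ∃ S : Submodule R M, (∀ i, a i ∈ S) ∧ Module.Injective R ↥S

/-!
The finitely many entries of a tuple in `⨁ i, M i` have nonzero components only in a finite set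
`s` of indices, and for each `i` the `i`-th components lie in an injective submodule `N i` of
`M i`. The finite product `∏ i ∈ s, N i` embeds in the direct sum as an injective submodule
containing the tuple.

For the second part, embed the direct sum into an injective module. Absolute purity makes this
embedding pure, so pure-injectivity gives a retraction, and a retract of an injective module is
injective.
-/

universe w

open DirectSum

section

variable {R : Type u} [Ring R] {ι : Type w} {M : ι → Type v}
  [∀ i, AddCommGroup (M i)] [∀ i, Module R (M i)]

theorem DirectSum.exists_injective_submodule_of_finite_support [Small.{v} R]
    (s : Finset ι) (N : ∀ i, Submodule R (M i)) [∀ i, Module.Injective R (N i)] :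
    ∃ S : Submodule R (⨁ i, M i), Module.Injective R S ∧
      ∀ x : ⨁ i, M i, (∀ i ∉ s, x i = 0) → (∀ i, x i ∈ N i) → x ∈ S := by
  classical
  have : Small.{max v w} R := small_lift R
  let Φ : (∀ i : (s : Set ι), N i) →ₗ[R] ⨁ i, M i :=
    DFinsupp.lmk s ∘ₗ LinearMap.piMap fun i => (N i).subtype
  have hΦ : Function.Injective Φ :=
    (DFinsupp.mk_injective s).comp (Pi.map_injective.mpr fun i => Subtype.val_injective)
  refine ⟨LinearMap.range Φ, (Module.Baer.of_equiv (LinearEquiv.ofInjective Φ hΦ)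
      (Module.Baer.of_injective inferInstance)).injective,
    fun x hs hN => ⟨fun i => ⟨x i, hN i⟩, ?_⟩⟩
  ext i
  change DFinsupp.mk s (fun i : (s : Set ι) => x i) i = x i
  rw [DFinsupp.mk_apply]
  split_ifs with hi
  · rfl
  · exact (hs i hi).symm

theorem IsLocallyInjectiveModule.directSum [Small.{v} R]
    (h : ∀ i, IsLocallyInjectiveModule R (M i)) : IsLocallyInjectiveModule R (⨁ i, M i) := by
  classical
  intro n a
  choose N haN hN using fun i => h i n fun k => a k i
  obtain ⟨S, hS, hmem⟩ := DirectSum.exists_injective_submodule_of_finite_support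
    (Finset.univ.biUnion fun k => (a k).support) N
  refine ⟨S, fun k => hmem _ (fun i hi => ?_) (haN · k), hS⟩
  exact DFinsupp.notMem_support_iff.mp fun h =>
    hi (Finset.mem_biUnion.mpr ⟨k, Finset.mem_univ k, h⟩)

end

section

variable {R : Type u} [Ring R] {D : Type v} [AddCommGroup D] [Module R D]

theorem Module.Injective.of_retraction {E : Type v} [AddCommGroup E] [Module R E]
    [Module.Injective R E] (f : D →ₗ[R] E) (g : E →ₗ[R] D)
    (hgf : g ∘ₗ f = LinearMap.id) :
    Module.Injective R D where
  out X Y _ _ _ _ i hi φ := by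
    obtain ⟨ψ, hψ⟩ := Module.Injective.out i hi (f ∘ₗ φ)
    refine ⟨g ∘ₗ ψ, fun x => ?_⟩
    rw [LinearMap.comp_apply, hψ]
    exact LinearMap.congr_fun hgf (φ x)

theorem Module.exists_embedding_into_injective [Small.{v} R] :
    ∃ (E : Type v) (_ : AddCommGroup E) (_ : Module R E), Module.Injective R E ∧
      ∃ f : D →ₗ[R] E, Function.Injective f := by
  let E := CategoryTheory.Injective.under (ModuleCat.of R D)
  have : CategoryTheory.Injective (ModuleCat.of R E) :=
    inferInstanceAs (CategoryTheory.Injective E)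
  exact ⟨E, _, _, injective_module_of_injective_object R E,
    (CategoryTheory.Injective.ι (ModuleCat.of R D)).hom,
    (ModuleCat.mono_iff_injective _).mp inferInstance⟩

theorem IsAbsolutelyPure.injective_of_isPureInjective [Small.{v} R]
    (hap : IsAbsolutelyPure R D) (hpi : IsPureInjective R D) : Module.Injective R D := by
  obtain ⟨E, _, _, _, f, hf⟩ := Module.exists_embedding_into_injective (R := R) (D := D)
  obtain ⟨g, hgf⟩ := hpi E f ⟨hf, hap E f hf⟩
  exact .of_retraction f g hgf

end

/-- a direct sum of locally injective modules is locally injective;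
moreover if it is additionally pure-injective and absolutely pure, it is injective. -/
theorem stmt19 (R : Type u) [Ring R] (ι : Type u) (M : ι → Type u)
    [∀ i, AddCommGroup (M i)] [∀ i, Module R (M i)]
    (h : ∀ i, IsLocallyInjectiveModule R (M i)) :
    IsLocallyInjectiveModule R (DirectSum ι M) ∧
      (IsPureInjective R (DirectSum ι M) → IsAbsolutelyPure R (DirectSum ι M) →
        Module.Injective R (DirectSum ι M)) :=
  ⟨.directSum h, fun hpi hap => hap.injective_of_isPureInjective hpi⟩
end
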